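/- (Global optimality for a quadratic inequality constraint.) Let A be a symmetric n×n real matrix, c ∈ ℝⁿ, and r ∈ ℝ. Suppose x̄ ∈ ℝⁿ and λ̄ ∈ ℝ satisfy the KKT conditions: (A + λ̄I)x̄ = c, λ̄ ≥ 0, ½‖x̄‖² − r ≤ 0, λ̄·(½‖x̄‖² − r) = 0, and suppose A + λ̄I is positive semidefinite. Then x̄ is a global minimizer of f(x) = ½⟨x, Ax⟩ − ⟨c, x⟩ over {x ∈ ℝⁿ : ½‖x‖² − r ≤ 0}: for every x with ½‖x‖² ≤ r, f(x̄) ≤ f(x). -/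

import Mathlib

open Matrix

/-!
Put `B = A + λ̄I`. Since `B x̄ = c`, completing the square gives
`f(x) + (λ̄/2)‖x‖² − f(x̄) − (λ̄/2)‖x̄‖² = ½⟨x − x̄, B(x − x̄)⟩ ≥ 0`, i.e. `x̄` minimizes the
Lagrangian `L(·, λ̄)` on all of `ℝⁿ`. Complementary slackness turns `(λ̄/2)‖x̄‖²` into `λ̄ r`,
and for a feasible `x` the term `(λ̄/2)‖x‖²` is at most `λ̄ r` because `λ̄ ≥ 0`.
-/

namespace Matrix

variable {ι R : Type*} [Fintype ι]

theorem IsSymm.dotProduct_sub_mulVec_sub [CommRing R] {B : Matrix ι ι R} (hB : B.IsSymm)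
    (x y : ι → R) :
    (x - y) ⬝ᵥ B *ᵥ (x - y) = x ⬝ᵥ B *ᵥ x - 2 * (x ⬝ᵥ B *ᵥ y) + y ⬝ᵥ B *ᵥ y := by
  have hswap : y ⬝ᵥ B *ᵥ x = x ⬝ᵥ B *ᵥ y := by
    simpa only [hB.eq] using dotProduct_transpose_mulVec B y x
  simp only [mulVec_sub, sub_dotProduct, dotProduct_sub, hswap]
  ring

theorem dotProduct_add_smul_one_mulVec [CommRing R] [DecidableEq ι] (A : Matrix ι ι R) (t : R)
    (x : ι → R) : x ⬝ᵥ (A + t • 1) *ᵥ x = x ⬝ᵥ A *ᵥ x + t * (x ⬝ᵥ x) := by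
  simp only [add_mulVec, smul_mulVec, one_mulVec, dotProduct_add, dotProduct_smul, smul_eq_mul]

theorem PosSemidef.half_dotProduct_mulVec_sub_le_of_mulVec_eq [Field R] [LinearOrder R]
    [IsStrictOrderedRing R] [StarRing R] [TrivialStar R] {B : Matrix ι ι R}
    (hB : B.PosSemidef) {y c : ι → R} (hy : B *ᵥ y = c) (x : ι → R) :
    (1 / 2) * (y ⬝ᵥ B *ᵥ y) - c ⬝ᵥ y ≤ (1 / 2) * (x ⬝ᵥ B *ᵥ x) - c ⬝ᵥ x := by
  have hsymm : B.IsSymm := isHermitian_iff_isSymm.mp hB.isHermitian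
  have hsq : 0 ≤ (x - y) ⬝ᵥ B *ᵥ (x - y) := by
    simpa only [star_trivial] using hB.dotProduct_mulVec_nonneg (x - y)
  rw [hsymm.dotProduct_sub_mulVec_sub] at hsq
  have hcx : c ⬝ᵥ x = x ⬝ᵥ B *ᵥ y := by rw [dotProduct_comm, hy]
  have hcy : c ⬝ᵥ y = y ⬝ᵥ B *ᵥ y := by rw [dotProduct_comm, hy]
  rw [hcx, hcy]
  linarith

end Matrix

theorem global_optimality_quadratic_inequality_general
    (n : ℕ) (A : Matrix (Fin n) (Fin n) ℝ)
    (c : Fin n → ℝ) (r : ℝ) (xb : Fin n → ℝ) (lb : ℝ)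
    (hstat : (A + lb • (1 : Matrix (Fin n) (Fin n) ℝ)).mulVec xb = c)
    (hdual : 0 ≤ lb)
    (hcompl : lb * ((1/2) * (xb ⬝ᵥ xb) - r) = 0)
    (hpsd : (A + lb • (1 : Matrix (Fin n) (Fin n) ℝ)).PosSemidef) :
    ∀ x : Fin n → ℝ, (1/2) * (x ⬝ᵥ x) ≤ r →
      (1/2) * (xb ⬝ᵥ A.mulVec xb) - c ⬝ᵥ xb
        ≤ (1/2) * (x ⬝ᵥ A.mulVec x) - c ⬝ᵥ x := by
  intro x hx
  have hlagrangian := hpsd.half_dotProduct_mulVec_sub_le_of_mulVec_eq hstat x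
  rw [dotProduct_add_smul_one_mulVec, dotProduct_add_smul_one_mulVec] at hlagrangian
  have hpenalty : lb * ((1/2) * (x ⬝ᵥ x)) ≤ lb * r := mul_le_mul_of_nonneg_left hx hdual
  linarith

/-- Global optimality for a quadratic inequality constraint:
if `(x̄, λ̄)` satisfies the KKT conditions for
`min {½⟨x,Ax⟩ − ⟨c,x⟩ : ½‖x‖² − r ≤ 0}` and `A + λ̄I` is positive
semidefinite, then `x̄` is a global minimizer over the feasible set. -/
theorem global_optimality_quadratic_inequality
    (n : ℕ) (A : Matrix (Fin n) (Fin n) ℝ) (hA : A.IsSymm)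
    (c : Fin n → ℝ) (r : ℝ) (xb : Fin n → ℝ) (lb : ℝ)
    (hstat : (A + lb • (1 : Matrix (Fin n) (Fin n) ℝ)).mulVec xb = c)
    (hdual : 0 ≤ lb)
    (hfeas : (1/2) * (xb ⬝ᵥ xb) - r ≤ 0)
    (hcompl : lb * ((1/2) * (xb ⬝ᵥ xb) - r) = 0)
    (hpsd : (A + lb • (1 : Matrix (Fin n) (Fin n) ℝ)).PosSemidef) :
    ∀ x : Fin n → ℝ, (1/2) * (x ⬝ᵥ x) ≤ r →
      (1/2) * (xb ⬝ᵥ A.mulVec xb) - c ⬝ᵥ xb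
        ≤ (1/2) * (x ⬝ᵥ A.mulVec x) - c ⬝ᵥ x :=
  global_optimality_quadratic_inequality_general n A c r xb lb hstat hdual hcompl hpsd
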